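/- arXiv:1412.6680 — 3 statements merged into one kernel-verified Lean document; each statement's English description precedes it below -/
import Mathlib

section
/- With ρ = 0, the MSE σ²_θ(Q₁,Q₂) = (s₁ + s₂ + c(α₂²Q₂ + α₁²Q₁)s₁s₂) / ((1 + cα₁²s₁Q₁)(1 + cα₂²s₂Q₂)) is strictly decreasing in Q₁ and in Q₂ for Q₁, Q₂ > 0; hence it is minimized on [0,Q₁ᵐᵃˣ]×[0,Q₂ᵐᵃˣ] at (Q₁ᵐᵃˣ, Q₂ᵐᵃˣ). -/
/-
With `a = c α₁² s₁` and `b = c α₂² s₂`, the numerator is `s₁ (1 + b Q₂) + s₂ (1 + a Q₁)`, so the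
error separates as `σ²_θ(Q₁, Q₂) = s₁ / (1 + a Q₁) + s₂ / (1 + b Q₂)`. Each summand is strictly
decreasing on `Q ≥ 0`, which gives both monotonicity claims and the minimum at the corner.
-/

lemma strictAntiOn_div_one_add_mul {s t : ℝ} (hs : 0 < s) (ht : 0 < t) :
    StrictAntiOn (fun x => s / (1 + t * x)) (Set.Ici 0) := by
  rintro x (hx : 0 ≤ x) y - hxy
  exact div_lt_div_of_pos_left hs (by positivity) (by gcongr)

lemma div_one_add_add_div_one_add {s₁ s₂ x y : ℝ} (hx : 1 + x ≠ 0) (hy : 1 + y ≠ 0) :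
    s₁ / (1 + x) + s₂ / (1 + y) = (s₁ + s₂ + (s₁ * y + s₂ * x)) / ((1 + x) * (1 + y)) := by
  rw [div_add_div _ _ hx hy]
  ring

theorem stmt_9_general (s₁ s₂ c α₁ α₂ Q₁max Q₂max : ℝ)
    (hs₁ : 0 < s₁) (hs₂ : 0 < s₂) (hc : 0 < c) (hα₁ : 0 < α₁) (hα₂ : 0 < α₂)
    (σθ : ℝ → ℝ → ℝ)
    (hσ : ∀ Q₁ Q₂, σθ Q₁ Q₂ =
      (s₁ + s₂ + c*(α₂^2*Q₂ + α₁^2*Q₁)*s₁*s₂) /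
        ((1 + c*α₁^2*s₁*Q₁) * (1 + c*α₂^2*s₂*Q₂))) :
    (∀ Q₂ > 0, StrictAntiOn (fun Q₁ => σθ Q₁ Q₂) (Set.Ioi 0)) ∧
    (∀ Q₁ > 0, StrictAntiOn (fun Q₂ => σθ Q₁ Q₂) (Set.Ioi 0)) ∧
    (∀ Q₁ ∈ Set.Icc (0:ℝ) Q₁max, ∀ Q₂ ∈ Set.Icc (0:ℝ) Q₂max,
      σθ Q₁max Q₂max ≤ σθ Q₁ Q₂) := by
  set f₁ := fun Q => s₁ / (1 + c*α₁^2*s₁ * Q)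
  set f₂ := fun Q => s₂ / (1 + c*α₂^2*s₂ * Q)
  have hf₁ : StrictAntiOn f₁ (Set.Ici 0) := strictAntiOn_div_one_add_mul hs₁ (by positivity)
  have hf₂ : StrictAntiOn f₂ (Set.Ici 0) := strictAntiOn_div_one_add_mul hs₂ (by positivity)
  have hsplit : ∀ Q₁ ≥ (0:ℝ), ∀ Q₂ ≥ (0:ℝ), σθ Q₁ Q₂ = f₁ Q₁ + f₂ Q₂ := by
    intro Q₁ hQ₁ Q₂ hQ₂
    rw [hσ, div_one_add_add_div_one_add (by positivity) (by positivity)]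
    ring_nf
  refine ⟨fun Q₂ hQ₂ => ?_, fun Q₁ hQ₁ => ?_, fun Q₁ hQ₁ Q₂ hQ₂ => ?_⟩
  · refine ((hf₁.mono Set.Ioi_subset_Ici_self).add_const (f₂ Q₂)).congr fun Q₁ hQ₁ => ?_
    exact (hsplit Q₁ (le_of_lt hQ₁) Q₂ hQ₂.le).symm
  · refine ((hf₂.mono Set.Ioi_subset_Ici_self).const_add (f₁ Q₁)).congr fun Q₂ hQ₂ => ?_
    exact (hsplit Q₁ hQ₁.le Q₂ (le_of_lt hQ₂)).symm
  · have hQ₁max : (0:ℝ) ≤ Q₁max := hQ₁.1.trans hQ₁.2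
    have hQ₂max : (0:ℝ) ≤ Q₂max := hQ₂.1.trans hQ₂.2
    rw [hsplit _ hQ₁max _ hQ₂max, hsplit _ hQ₁.1 _ hQ₂.1]
    exact add_le_add (hf₁.antitoneOn hQ₁.1 hQ₁max hQ₁.2) (hf₂.antitoneOn hQ₂.1 hQ₂max hQ₂.2)

theorem stmt_9 (s₁ s₂ c α₁ α₂ Q₁max Q₂max : ℝ)
    (hs₁ : 0 < s₁) (hs₂ : 0 < s₂) (hc : 0 < c) (hα₁ : 0 < α₁) (hα₂ : 0 < α₂)
    (hQ₁ : 0 < Q₁max) (hQ₂ : 0 < Q₂max)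
    (σθ : ℝ → ℝ → ℝ)
    (hσ : ∀ Q₁ Q₂, σθ Q₁ Q₂ =
      (s₁ + s₂ + c*(α₂^2*Q₂ + α₁^2*Q₁)*s₁*s₂) /
        ((1 + c*α₁^2*s₁*Q₁) * (1 + c*α₂^2*s₂*Q₂))) :
    (∀ Q₂ > 0, StrictAntiOn (fun Q₁ => σθ Q₁ Q₂) (Set.Ioi 0)) ∧
    (∀ Q₁ > 0, StrictAntiOn (fun Q₂ => σθ Q₁ Q₂) (Set.Ioi 0)) ∧
    (∀ Q₁ ∈ Set.Icc (0:ℝ) Q₁max, ∀ Q₂ ∈ Set.Icc (0:ℝ) Q₂max,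
      σθ Q₁max Q₂max ≤ σθ Q₁ Q₂) :=
  stmt_9_general s₁ s₂ c α₁ α₂ Q₁max Q₂max hs₁ hs₂ hc hα₁ hα₂ σθ hσ
end

section
/- Let D₁, D₃ > 0 and D₄ ∈ ℂ with |D₄| < D₁, and suppose |D₂|² < D₃(D₁ - |D₄|). Then the function CRLB₁(|D₂|²) = D₃(D₁D₃ - |D₂|²) / (|D₂|⁴ - 2D₁D₃|D₂|² + D₁²D₃² - |D₄|²D₃²) is strictly increasing in |D₂|² on this range, hence minimized at |D₂|² = 0, where it equals D₁/(D₁² - |D₄|²). -/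
/-! Writing `u = D₁D₃ - t` and `c = ‖D₄‖D₃`, the denominator of `CRLB₁ t` is `u² - c²`, so
`CRLB₁ t = D₃ · u / (u² - c²)`. On `u > c ≥ 0` the map `u ↦ u / (u² - c²)` is strictly
decreasing, and `t ↦ u` is decreasing, so `CRLB₁` is strictly increasing in `t`. -/

open Set

theorem strictAntiOn_div_sq_sub_sq {𝕜 : Type*} [Field 𝕜] [LinearOrder 𝕜]
    [IsStrictOrderedRing 𝕜] {c : 𝕜} (hc : 0 ≤ c) :
    StrictAntiOn (fun u : 𝕜 => u / (u ^ 2 - c ^ 2)) (Ioi c) := by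
  intro u (hu : c < u) v (hv : c < v) huv
  have hu' : 0 < u ^ 2 - c ^ 2 := by nlinarith
  have hv' : 0 < v ^ 2 - c ^ 2 := by nlinarith
  rw [div_lt_div_iff₀ hv' hu']
  -- `u (v² - c²) - v (u² - c²) = (v - u)(u v + c²)`
  nlinarith [mul_pos (sub_pos.2 huv) (add_pos_of_pos_of_nonneg (mul_pos (hc.trans_lt hu)
    (hc.trans_lt hv)) (sq_nonneg c))]

theorem stmt_10_general (D₁ D₃ : ℝ) (D₄ : ℂ) (hD₃ : 0 < D₃)
    (CRLB₁ : ℝ → ℝ)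
    (hC : ∀ t, CRLB₁ t = D₃*(D₁*D₃ - t) /
      (t^2 - 2*D₁*D₃*t + D₁^2*D₃^2 - (‖D₄‖)^2*D₃^2)) :
    StrictMonoOn CRLB₁ (Set.Ico 0 (D₃*(D₁ - ‖D₄‖))) ∧
    CRLB₁ 0 = D₁/(D₁^2 - (‖D₄‖)^2) ∧
    (∀ t ∈ Set.Ico (0:ℝ) (D₃*(D₁ - ‖D₄‖)), CRLB₁ 0 ≤ CRLB₁ t) := by
  have hform : ∀ t, CRLB₁ t =
      D₃ * ((D₁*D₃ - t) / ((D₁*D₃ - t)^2 - (‖D₄‖*D₃)^2)) := by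
    intro t
    rw [hC, mul_div_assoc]
    ring_nf
  have hshift : ∀ t ∈ Ico 0 (D₃*(D₁ - ‖D₄‖)), D₁*D₃ - t ∈ Ioi (‖D₄‖*D₃) := by
    intro t ht
    simp only [mem_Ioi]
    linarith [ht.2]
  have hmono : StrictMonoOn CRLB₁ (Ico 0 (D₃*(D₁ - ‖D₄‖))) := by
    intro x hx y hy hxy
    rw [hform, hform]
    exact mul_lt_mul_of_pos_left (strictAntiOn_div_sq_sub_sq
      (mul_nonneg (norm_nonneg D₄) hD₃.le) (hshift y hy) (hshift x hx) (by linarith)) hD₃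
  refine ⟨hmono, ?_, fun t ht => ?_⟩
  · calc CRLB₁ 0 = D₃^2 * D₁ / (D₃^2 * (D₁^2 - ‖D₄‖^2)) := by rw [hC]; congr 1 <;> ring
      _ = D₁ / (D₁^2 - ‖D₄‖^2) := mul_div_mul_left _ _ (pow_ne_zero 2 hD₃.ne')
  · exact hmono.monotoneOn ⟨le_rfl, ht.1.trans_lt ht.2⟩ ht ht.1

theorem stmt_10 (D₁ D₃ : ℝ) (D₄ : ℂ) (hD₁ : 0 < D₁) (hD₃ : 0 < D₃)
    (hD₄ : ‖D₄‖ < D₁)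
    (CRLB₁ : ℝ → ℝ)
    (hC : ∀ t, CRLB₁ t = D₃*(D₁*D₃ - t) /
      (t^2 - 2*D₁*D₃*t + D₁^2*D₃^2 - (‖D₄‖)^2*D₃^2)) :
    StrictMonoOn CRLB₁ (Set.Ico 0 (D₃*(D₁ - ‖D₄‖))) ∧
    CRLB₁ 0 = D₁/(D₁^2 - (‖D₄‖)^2) ∧
    (∀ t ∈ Set.Ico (0:ℝ) (D₃*(D₁ - ‖D₄‖)), CRLB₁ 0 ≤ CRLB₁ t) :=
  stmt_10_general D₁ D₃ D₄ hD₃ CRLB₁ hC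
end

section
/- With notation as above (B = R⁻¹ - R⁻¹t₂t₂ᴴR⁻¹/(t₂ᴴR⁻¹t₂), R = σ²ξ(I + aP_T), P_T the projection onto span{t₁,t₂}), for any z ∈ ℂᴸ: zᴴBt₁ = (1/(σ²ξ(1+a)))·(zᴴt₁ - ρ*√(Q₁/Q₂)·zᴴt₂). -/
/-!
`R` acts on `span {t₁, t₂}` as the scalar `σ²ξ(1 + a)`, and since `P` is an idempotent the inverse
of `R` is again of the form `s⁻¹ (1 - b P)`. Hence `t₁`, `t₂` are right eigenvectors and, `P` being
Hermitian, `t₂ᴴ` is a left eigenvector of `R⁻¹`, all for `c = (σ²ξ(1 + a))⁻¹`. For such common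
eigenvectors the rank-one correction in `B` collapses to `B t₁ = c (t₁ - (t₂ᴴt₁ / Q₂) t₂)`, and
`conj ρ · √(Q₁/Q₂) = t₂ᴴt₁ / Q₂`.
-/

open Matrix

namespace Matrix

variable {n K : Type*} [Fintype n] [Field K]

def wedderburnReduction (M : Matrix n n K) (w y : n → K) : Matrix n n K :=
  M - (w ⬝ᵥ (M *ᵥ y))⁻¹ • vecMulVec (M *ᵥ y) (w ᵥ* M)

theorem wedderburnReduction_mulVec_of_eigenvector {M : Matrix n n K} {w x y : n → K} {c : K}
    (hx : M *ᵥ x = c • x) (hy : M *ᵥ y = c • y) (hw : w ᵥ* M = c • w) :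
    wedderburnReduction M w y *ᵥ x = c • (x - (w ⬝ᵥ x / (w ⬝ᵥ y)) • y) := by
  rcases eq_or_ne c 0 with rfl | hc
  · simp [wedderburnReduction, hx, hy, hw]
  have hscalar : (w ⬝ᵥ c • y)⁻¹ * (c * (w ⬝ᵥ x)) = w ⬝ᵥ x / (w ⬝ᵥ y) := by
    rw [dotProduct_smul, smul_eq_mul, mul_inv, mul_mul_mul_comm, inv_mul_cancel₀ hc, one_mul,
      div_eq_inv_mul]
  simp only [wedderburnReduction, sub_mulVec, smul_mulVec, vecMulVec_mulVec, hx, hy, hw,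
    smul_dotProduct, op_smul_eq_smul]
  linear_combination (norm := module) (-c • hscalar) • y

variable [DecidableEq n]

theorem inv_smul_one_add_smul_of_isIdempotentElem {P : Matrix n n K} (hP : IsIdempotentElem P)
    {s a : K} (hs : s ≠ 0) (ha : 1 + a ≠ 0) :
    (s • (1 + a • P))⁻¹ = s⁻¹ • (1 - (a / (1 + a)) • P) := by
  refine inv_eq_right_inv ?_
  have hcoeff : a - a / (1 + a) - a * (a / (1 + a)) = 0 := by field_simp; ring
  have hPP : P * P = P := hP
  simp only [smul_mul_smul_comm, mul_inv_cancel₀ hs, one_smul, add_mul, mul_sub, one_mul,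
    mul_one, hPP]
  linear_combination (norm := module) hcoeff • P

theorem inv_smul_one_add_smul_mulVec_of_mulVec_eq_self {P : Matrix n n K}
    (hP : IsIdempotentElem P) {s a : K} (hs : s ≠ 0) (ha : 1 + a ≠ 0) {v : n → K}
    (hv : P *ᵥ v = v) : (s • (1 + a • P))⁻¹ *ᵥ v = (s * (1 + a))⁻¹ • v := by
  rw [inv_smul_one_add_smul_of_isIdempotentElem hP hs ha]
  have hb : 1 - a / (1 + a) = (1 + a)⁻¹ := by field_simp; ring
  simp only [smul_mulVec, sub_mulVec, one_mulVec, hv]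
  rw [mul_inv]
  linear_combination (norm := module) (s⁻¹ • hb) • v

theorem vecMul_inv_smul_one_add_smul_of_vecMul_eq_self {P : Matrix n n K}
    (hP : IsIdempotentElem P) {s a : K} (hs : s ≠ 0) (ha : 1 + a ≠ 0) {w : n → K}
    (hw : w ᵥ* P = w) : w ᵥ* (s • (1 + a • P))⁻¹ = (s * (1 + a))⁻¹ • w := by
  rw [inv_smul_one_add_smul_of_isIdempotentElem hP hs ha]
  have hb : 1 - a / (1 + a) = (1 + a)⁻¹ := by field_simp; ring
  simp only [vecMul_smul, vecMul_sub, vecMul_one, hw]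
  rw [mul_inv]
  linear_combination (norm := module) (s⁻¹ • hb) • w

end Matrix

theorem Real.sqrt_div_eq_sqrt_mul_div (x : ℝ) {y : ℝ} (hy : 0 < y) : √(x / y) = √(x * y) / y := by
  rw [Real.sqrt_div' x hy.le, Real.sqrt_mul' x hy.le]
  have : √y ≠ 0 := (Real.sqrt_pos.mpr hy).ne'
  field_simp
  rw [Real.sq_sqrt hy.le]

open scoped ComplexOrder

theorem stmt_16_general {L : ℕ}
    (t₁ t₂ : Fin L → ℂ) (hli : LinearIndependent ℂ ![t₁, t₂])
    (Q₁ Q₂ : ℝ) (hQ₁ : (Q₁ : ℂ) = star t₁ ⬝ᵥ t₁) (hQ₂ : (Q₂ : ℂ) = star t₂ ⬝ᵥ t₂)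
    (ρ : ℂ) (hρ : ρ = (star t₁ ⬝ᵥ t₂) / (Real.sqrt (Q₁ * Q₂) : ℂ))
    (P : Matrix (Fin L) (Fin L) ℂ)
    (hPh : P.conjTranspose = P) (hPi : P * P = P)
    (hPt₁ : P *ᵥ t₁ = t₁) (hPt₂ : P *ᵥ t₂ = t₂)
    (σ2 ξ a : ℝ) (hσ : 0 < σ2) (hξ : 0 < ξ) (ha : -1 < a)
    (R B : Matrix (Fin L) (Fin L) ℂ)
    (hR : R = ((σ2 * ξ : ℝ) : ℂ) • (1 + (a : ℂ) • P))
    (hB : B = R⁻¹ - (star t₂ ⬝ᵥ (R⁻¹ *ᵥ t₂))⁻¹ • Matrix.vecMulVec (R⁻¹ *ᵥ t₂) (star t₂ ᵥ* R⁻¹)) :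
    ∀ z : Fin L → ℂ,
      star z ⬝ᵥ (B *ᵥ t₁) =
        ((1 / (σ2 * ξ * (1 + a)) : ℝ) : ℂ) *
          (star z ⬝ᵥ t₁ - (starRingEnd ℂ) ρ * ((Real.sqrt (Q₁ / Q₂) : ℝ) : ℂ) * (star z ⬝ᵥ t₂)) := by
  intro z
  have hQ_pos {t : Fin L → ℂ} {Q : ℝ} (hQ : (Q : ℂ) = star t ⬝ᵥ t) (ht : t ≠ 0) : 0 < Q :=
    Complex.zero_lt_real.mp (hQ ▸ dotProduct_star_self_pos_iff.mpr ht)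
  have hQ₁pos := hQ_pos hQ₁ (by simpa using hli.ne_zero 0)
  have hQ₂pos := hQ_pos hQ₂ (by simpa using hli.ne_zero 1)
  have hs : ((σ2 * ξ : ℝ) : ℂ) ≠ 0 := by exact_mod_cast (mul_pos hσ hξ).ne'
  have ha' : 1 + (a : ℂ) ≠ 0 := by exact_mod_cast (by linarith : (0 : ℝ) < 1 + a).ne'
  set c : ℂ := (((σ2 * ξ : ℝ) : ℂ) * (1 + a))⁻¹ with hc
  have hRinv_mulVec {t : Fin L → ℂ} (ht : P *ᵥ t = t) : R⁻¹ *ᵥ t = c • t :=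
    hR ▸ inv_smul_one_add_smul_mulVec_of_mulVec_eq_self hPi hs ha' ht
  have ht₂_vecMul_Rinv : star t₂ ᵥ* R⁻¹ = c • star t₂ := by
    refine hR ▸ vecMul_inv_smul_one_add_smul_of_vecMul_eq_self hPi hs ha' ?_
    rw [← hPh, ← star_mulVec, hPt₂]
  have hBt₁ : B *ᵥ t₁ = c • (t₁ - (star t₂ ⬝ᵥ t₁ / Q₂) • t₂) := by
    rw [hB, hQ₂]
    exact wedderburnReduction_mulVec_of_eigenvector (hRinv_mulVec hPt₁) (hRinv_mulVec hPt₂)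
      ht₂_vecMul_Rinv
  have hcoeff : starRingEnd ℂ ρ * ((√(Q₁ / Q₂) : ℝ) : ℂ) = star t₂ ⬝ᵥ t₁ / Q₂ := by
    have : (√(Q₁ * Q₂) : ℂ) ≠ 0 := by exact_mod_cast (Real.sqrt_pos.mpr (by positivity)).ne'
    rw [hρ, map_div₀, Complex.conj_ofReal, Real.sqrt_div_eq_sqrt_mul_div Q₁ hQ₂pos,
      star_dotProduct, starRingEnd_apply, star_star]
    push_cast
    field_simp
  rw [hBt₁, hcoeff, hc, dotProduct_smul, dotProduct_sub, dotProduct_smul]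
  push_cast
  ring

theorem stmt_16 {L : ℕ}
    (t₁ t₂ : Fin L → ℂ) (hli : LinearIndependent ℂ ![t₁, t₂])
    (Q₁ Q₂ : ℝ) (hQ₁ : (Q₁ : ℂ) = star t₁ ⬝ᵥ t₁) (hQ₂ : (Q₂ : ℂ) = star t₂ ⬝ᵥ t₂)
    (ρ : ℂ) (hρ : ρ = (star t₁ ⬝ᵥ t₂) / (Real.sqrt (Q₁ * Q₂) : ℂ))
    (P : Matrix (Fin L) (Fin L) ℂ)
    (hPh : P.conjTranspose = P) (hPi : P * P = P)
    (hPt₁ : P *ᵥ t₁ = t₁) (hPt₂ : P *ᵥ t₂ = t₂)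
    (hPrange : ∀ v : Fin L → ℂ, P *ᵥ v ∈ Submodule.span ℂ {t₁, t₂})
    (σ2 ξ a : ℝ) (hσ : 0 < σ2) (hξ : 0 < ξ) (ha : -1 < a)
    (R B : Matrix (Fin L) (Fin L) ℂ)
    (hR : R = ((σ2 * ξ : ℝ) : ℂ) • (1 + (a : ℂ) • P))
    (hB : B = R⁻¹ - (star t₂ ⬝ᵥ (R⁻¹ *ᵥ t₂))⁻¹ • Matrix.vecMulVec (R⁻¹ *ᵥ t₂) (star t₂ ᵥ* R⁻¹)) :
    ∀ z : Fin L → ℂ,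
      star z ⬝ᵥ (B *ᵥ t₁) =
        ((1 / (σ2 * ξ * (1 + a)) : ℝ) : ℂ) *
          (star z ⬝ᵥ t₁ - (starRingEnd ℂ) ρ * ((Real.sqrt (Q₁ / Q₂) : ℝ) : ℂ) * (star z ⬝ᵥ t₂)) :=
  stmt_16_general t₁ t₂ hli Q₁ Q₂ hQ₁ hQ₂ ρ hρ P hPh hPi hPt₁ hPt₂ σ2 ξ a hσ hξ ha R B hR hB
end
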